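/- Every based matrix over an abelian group H is obtained from a primitive based matrix by a finite sequence of elementary extensions, and any two homologous primitive based matrices are isomorphic. Consequently, each based matrix is homologous to a primitive based matrix that is unique up to isomorphism. -/

import Mathlib

/-!  Based skew-symmetric matrices over an abelian group `H`, after Turaev.
A based matrix is a triple `(G, s, b)` where `G` is a finite set, `s ∈ G`,
and `b : G × G → H` is skew-symmetric.  We realize the finite set `G` as a
finite set of natural numbers; the values of `b` outside `G` are irrelevant
(isomorphism, homology, fillings etc. only refer to values on `G`). -/

/-- The data of a based matrix over `H`: a finite carrier `G ⊆ ℕ`, a base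
point `s` and a pairing `b`. -/
structure PreBM (H : Type*) where
  /-- the underlying finite set -/
  G : Finset ℕ
  /-- the base point `s` -/
  s : ℕ
  /-- the pairing -/
  b : ℕ → ℕ → H

variable {H : Type*} [AddCommGroup H]

/-- `(G, s, b)` is a based matrix: `s ∈ G` and `b` is skew-symmetric on `G`
(with vanishing diagonal). -/
def IsBM (T : PreBM H) : Prop :=
  T.s ∈ T.G ∧ (∀ g ∈ T.G, ∀ h ∈ T.G, T.b g h = -T.b h g) ∧
    ∀ g ∈ T.G, T.b g g = 0

/-- Isomorphism of based matrices: a bijection of the carriers preserving the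
base point and the pairing. -/
def BMIso (T T' : PreBM H) : Prop :=
  ∃ f : ℕ → ℕ, Set.BijOn f (T.G : Set ℕ) (T'.G : Set ℕ) ∧ f T.s = T'.s ∧
    ∀ g ∈ T.G, ∀ h ∈ T.G, T'.b (f g) (f h) = T.b g h

/-- `g` is an annihilating element of `T`. -/
def Annihilating (T : PreBM H) (g : ℕ) : Prop :=
  g ∈ T.G ∧ g ≠ T.s ∧ ∀ h ∈ T.G, T.b g h = 0

/-- `g` is a core element of `T`. -/
def CoreElt (T : PreBM H) (g : ℕ) : Prop :=
  g ∈ T.G ∧ g ≠ T.s ∧ ∀ h ∈ T.G, T.b g h = T.b T.s h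

/-- `g₁, g₂` is a complementary pair of elements of `T`. -/
def ComplPair (T : PreBM H) (g₁ g₂ : ℕ) : Prop :=
  g₁ ∈ T.G ∧ g₂ ∈ T.G ∧ g₁ ≠ T.s ∧ g₂ ≠ T.s ∧ g₁ ≠ g₂ ∧
    ∀ h ∈ T.G, T.b g₁ h + T.b g₂ h = T.b T.s h

/-- A based matrix is primitive if it has no annihilating elements, no core
elements and no complementary pairs. -/
def Primitive (T : PreBM H) : Prop :=
  (∀ g, ¬Annihilating T g) ∧ (∀ g, ¬CoreElt T g) ∧ ∀ g₁ g₂, ¬ComplPair T g₁ g₂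

/-- Elementary extension `M₁`: adjoin one annihilating element. -/
def IsExt1 (T T' : PreBM H) : Prop :=
  T'.s = T.s ∧ ∃ g, g ∉ T.G ∧ T'.G = insert g T.G ∧
    (∀ x ∈ T.G, ∀ y ∈ T.G, T'.b x y = T.b x y) ∧
    ∀ h ∈ T'.G, T'.b g h = 0

/-- Elementary extension `M₂`: adjoin one core element. -/
def IsExt2 (T T' : PreBM H) : Prop :=
  T'.s = T.s ∧ ∃ g, g ∉ T.G ∧ T'.G = insert g T.G ∧
    (∀ x ∈ T.G, ∀ y ∈ T.G, T'.b x y = T.b x y) ∧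
    ∀ h ∈ T'.G, T'.b g h = T'.b T'.s h

/-- Elementary extension `M₃`: adjoin a pair of complementary elements. -/
def IsExt3 (T T' : PreBM H) : Prop :=
  T'.s = T.s ∧ ∃ g₁ g₂, g₁ ∉ T.G ∧ g₂ ∉ T.G ∧ g₁ ≠ g₂ ∧
    T'.G = insert g₁ (insert g₂ T.G) ∧
    (∀ x ∈ T.G, ∀ y ∈ T.G, T'.b x y = T.b x y) ∧
    ∀ h ∈ T'.G, T'.b g₁ h + T'.b g₂ h = T'.b T'.s h

/-- One elementary extension between based matrices. -/
def StepExt (T T' : PreBM H) : Prop :=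
  IsBM T ∧ IsBM T' ∧ (IsExt1 T T' ∨ IsExt2 T T' ∨ IsExt3 T T')

/-- Two based matrices are homologous if they are related by a finite
sequence of elementary extensions, inverse extensions and isomorphisms. -/
def Homologous : PreBM H → PreBM H → Prop :=
  Relation.EqvGen fun T T' => StepExt T T' ∨ (IsBM T ∧ IsBM T' ∧ BMIso T T')


/-!
Inverse elementary extensions delete an annihilating element, a core element or a complementary
pair. They shrink the carrier, so iterating them ends at a primitive matrix, and they are locally
confluent up to isomorphism: deletions of disjoint sets commute, deleting one element of a
complementary pair leaves its partner annihilating or core, and two complementary pairs sharing an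
element `c` have equal rows at their other elements, so the transposition of those two is an
automorphism. By Newman's lemma the primitive reduct is then unique up to isomorphism, and since
deletions transport along isomorphisms it is an invariant of homology.
-/

section

variable {H : Type*}

namespace PreBM

def remove (T : PreBM H) (D : Finset ℕ) : PreBM H := ⟨T.G \ D, T.s, T.b⟩

@[simp] lemma remove_G (T : PreBM H) (D : Finset ℕ) : (T.remove D).G = T.G \ D := rfl
@[simp] lemma remove_s (T : PreBM H) (D : Finset ℕ) : (T.remove D).s = T.s := rfl
@[simp] lemma remove_b (T : PreBM H) (D : Finset ℕ) : (T.remove D).b = T.b := rfl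

lemma remove_remove (T : PreBM H) (D E : Finset ℕ) :
    (T.remove D).remove E = T.remove (D ∪ E) := by
  simp [remove, sdiff_sdiff_left]

structure IsoMap (f : ℕ → ℕ) (T T' : PreBM H) : Prop where
  bijOn : Set.BijOn f T.G T'.G
  map_s : f T.s = T'.s
  map_b : ∀ g ∈ T.G, ∀ h ∈ T.G, T'.b (f g) (f h) = T.b g h

namespace IsoMap

variable {f : ℕ → ℕ} {T T' : PreBM H}

lemma mem (hf : IsoMap f T T') {g : ℕ} (hg : g ∈ T.G) : f g ∈ T'.G := hf.bijOn.mapsTo hg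

lemma ne_s (hf : IsoMap f T T') (hs : T.s ∈ T.G) {g : ℕ} (hg : g ∈ T.G) (hgs : g ≠ T.s) :
    f g ≠ T'.s := by
  rw [← hf.map_s]
  exact fun h => hgs (hf.bijOn.injOn hg hs h)

lemma forall_mem (hf : IsoMap f T T') {p : ℕ → Prop} :
    (∀ h ∈ T'.G, p h) ↔ ∀ g ∈ T.G, p (f g) := by
  simp_rw [← Finset.mem_coe, ← hf.bijOn.image_eq, Set.forall_mem_image]

lemma map_b_s (hf : IsoMap f T T') (hs : T.s ∈ T.G) {g : ℕ} (hg : g ∈ T.G) :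
    T'.b T'.s (f g) = T.b T.s g := by
  rw [← hf.map_s, hf.map_b _ hs _ hg]

lemma coreElt (hf : IsoMap f T T') (hs : T.s ∈ T.G) {g : ℕ} (h : CoreElt T g) :
    CoreElt T' (f g) := by
  refine ⟨hf.mem h.1, hf.ne_s hs h.1 h.2.1, hf.forall_mem.mpr fun x hx => ?_⟩
  rw [hf.map_b _ h.1 _ hx, h.2.2 x hx, hf.map_b_s hs hx]

lemma remove (hf : IsoMap f T T') {D : Finset ℕ} (hD : D ⊆ T.G) :
    IsoMap f (T.remove D) (T'.remove (D.image f)) := by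
  refine ⟨?_, hf.map_s, fun g hg h hh =>
    hf.map_b g (Finset.sdiff_subset hg) h (Finset.sdiff_subset hh)⟩
  have := hf.bijOn.subset_left (Set.sdiff_subset (s := (T.G : Set ℕ)) (t := D))
  rw [hf.bijOn.injOn.image_sdiff, hf.bijOn.image_eq,
    Set.inter_eq_right.mpr (Finset.coe_subset.mpr hD)] at this
  simpa using this

end IsoMap

end PreBM

open PreBM

lemma bmIso_iff {T T' : PreBM H} : BMIso T T' ↔ ∃ f, IsoMap f T T' :=
  ⟨fun ⟨f, h₁, h₂, h₃⟩ => ⟨f, h₁, h₂, h₃⟩, fun ⟨f, h⟩ => ⟨f, h.1, h.2, h.3⟩⟩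

namespace BMIso

lemma of_agree {T T' : PreBM H} (hG : T.G = T'.G) (hs : T.s = T'.s)
    (hb : ∀ g ∈ T.G, ∀ h ∈ T.G, T'.b g h = T.b g h) : BMIso T T' :=
  ⟨id, hG ▸ Set.bijOn_id _, hs, hb⟩

@[refl] lemma refl (T : PreBM H) : BMIso T T := of_agree rfl rfl fun _ _ _ _ => rfl

lemma symm {T T' : PreBM H} (hs : T.s ∈ T.G) (e : BMIso T T') : BMIso T' T := by
  obtain ⟨f, hbij, hfs, hb⟩ := e
  have hinv := hbij.invOn_invFunOn
  have hbij' := hbij.symm hinv.symm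
  refine ⟨Function.invFunOn f T.G, hbij', ?_, fun g hg h hh => ?_⟩
  · rw [← hfs, hinv.1 hs]
  · rw [← hb _ (hbij'.mapsTo hg) _ (hbij'.mapsTo hh), hinv.2 hg, hinv.2 hh]

lemma trans {T T' T'' : PreBM H} (e : BMIso T T') (e' : BMIso T' T'') : BMIso T T'' := by
  obtain ⟨f, hbij, hs, hb⟩ := e
  obtain ⟨f', hbij', hs', hb'⟩ := e'
  refine ⟨f' ∘ f, hbij'.comp hbij, by simp [hs, hs'], fun g hg h hh => ?_⟩
  simp only [Function.comp_apply, hb' _ (hbij.mapsTo hg) _ (hbij.mapsTo hh), hb g hg h hh]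

lemma s_mem {T T' : PreBM H} (e : BMIso T T') (hs : T.s ∈ T.G) : T'.s ∈ T'.G := by
  obtain ⟨f, hbij, hfs, -⟩ := e
  exact hfs ▸ hbij.mapsTo hs

end BMIso

lemma CoreElt.remove {T : PreBM H} {D : Finset ℕ} {g : ℕ} (h : CoreElt T g) (hg : g ∉ D) :
    CoreElt (T.remove D) g :=
  ⟨Finset.mem_sdiff.mpr ⟨h.1, hg⟩, h.2.1, fun x hx => h.2.2 x (Finset.sdiff_subset hx)⟩

end

open PreBM

lemma IsBM.remove {T : PreBM H} (hT : IsBM T) {D : Finset ℕ} (hs : T.s ∉ D) :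
    IsBM (T.remove D) :=
  ⟨Finset.mem_sdiff.mpr ⟨hT.1, hs⟩, fun g hg h hh => hT.2.1 g (Finset.sdiff_subset hg) h
    (Finset.sdiff_subset hh), fun g hg => hT.2.2 g (Finset.sdiff_subset hg)⟩

section Remove

variable {T : PreBM H} {D : Finset ℕ}

lemma Annihilating.remove {g : ℕ} (h : Annihilating T g) (hg : g ∉ D) :
    Annihilating (T.remove D) g :=
  ⟨Finset.mem_sdiff.mpr ⟨h.1, hg⟩, h.2.1, fun x hx => h.2.2 x (Finset.sdiff_subset hx)⟩

lemma ComplPair.remove {g₁ g₂ : ℕ} (h : ComplPair T g₁ g₂) (hg₁ : g₁ ∉ D) (hg₂ : g₂ ∉ D) :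
    ComplPair (T.remove D) g₁ g₂ :=
  ⟨Finset.mem_sdiff.mpr ⟨h.1, hg₁⟩, Finset.mem_sdiff.mpr ⟨h.2.1, hg₂⟩, h.2.2.1, h.2.2.2.1,
    h.2.2.2.2.1, fun x hx => h.2.2.2.2.2 x (Finset.sdiff_subset hx)⟩

end Remove

lemma ComplPair.symm {T : PreBM H} {g₁ g₂ : ℕ} (h : ComplPair T g₁ g₂) : ComplPair T g₂ g₁ :=
  ⟨h.2.1, h.1, h.2.2.2.1, h.2.2.1, h.2.2.2.2.1.symm,
    fun x hx => (add_comm _ _).trans (h.2.2.2.2.2 x hx)⟩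

lemma Annihilating.coreElt_remove {T : PreBM H} {g g' : ℕ} (hg : Annihilating T g)
    (hP : ComplPair T g g') : CoreElt (T.remove {g}) g' := by
  refine ⟨by simp [hP.2.1, hP.2.2.2.2.1.symm], hP.2.2.2.1, fun x hx => ?_⟩
  have hx := Finset.sdiff_subset hx
  simpa [hg.2.2 x hx] using hP.2.2.2.2.2 x hx

lemma CoreElt.annihilating_remove {T : PreBM H} {g g' : ℕ} (hg : CoreElt T g)
    (hP : ComplPair T g g') : Annihilating (T.remove {g}) g' := by
  refine ⟨by simp [hP.2.1, hP.2.2.2.2.1.symm], hP.2.2.2.1, fun x hx => ?_⟩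
  have hx := Finset.sdiff_subset hx
  simpa [hg.2.2 x hx] using hP.2.2.2.2.2 x hx

namespace PreBM.IsoMap

variable {f : ℕ → ℕ} {T T' : PreBM H}

lemma annihilating (hf : IsoMap f T T') (hs : T.s ∈ T.G) {g : ℕ} (h : Annihilating T g) :
    Annihilating T' (f g) := by
  refine ⟨hf.mem h.1, hf.ne_s hs h.1 h.2.1, hf.forall_mem.mpr fun x hx => ?_⟩
  rw [hf.map_b _ h.1 _ hx, h.2.2 x hx]

lemma complPair (hf : IsoMap f T T') (hs : T.s ∈ T.G) {g₁ g₂ : ℕ} (h : ComplPair T g₁ g₂) :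
    ComplPair T' (f g₁) (f g₂) := by
  obtain ⟨h₁, h₂, hs₁, hs₂, hne, hsum⟩ := h
  refine ⟨hf.mem h₁, hf.mem h₂, hf.ne_s hs h₁ hs₁, hf.ne_s hs h₂ hs₂,
    fun e => hne (hf.bijOn.injOn h₁ h₂ e), hf.forall_mem.mpr fun x hx => ?_⟩
  rw [hf.map_b _ h₁ _ hx, hf.map_b _ h₂ _ hx, hf.map_b_s hs hx, hsum x hx]

end PreBM.IsoMap

def Removable (T : PreBM H) (D : Finset ℕ) : Prop :=
  (∃ g, D = {g} ∧ (Annihilating T g ∨ CoreElt T g)) ∨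
    ∃ g₁ g₂, D = {g₁, g₂} ∧ ComplPair T g₁ g₂

def Reduces (T T' : PreBM H) : Prop := ∃ D, Removable T D ∧ T' = T.remove D

namespace Removable

variable {T : PreBM H} {D : Finset ℕ}

lemma subset (h : Removable T D) : D ⊆ T.G := by
  rcases h with ⟨g, rfl, ⟨hg, -⟩ | ⟨hg, -⟩⟩ | ⟨g₁, g₂, rfl, hP⟩
  · simpa using hg
  · simpa using hg
  · simp [Finset.insert_subset_iff, hP.1, hP.2.1]

lemma nonempty (h : Removable T D) : D.Nonempty := by
  rcases h with ⟨g, rfl, -⟩ | ⟨g₁, g₂, rfl, -⟩ <;> simp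

lemma s_notMem (h : Removable T D) : T.s ∉ D := by
  rcases h with ⟨g, rfl, ⟨-, hg, -⟩ | ⟨-, hg, -⟩⟩ | ⟨g₁, g₂, rfl, hP⟩
  · simpa using hg.symm
  · simpa using hg.symm
  · simp [hP.2.2.1.symm, hP.2.2.2.1.symm]

lemma remove (h : Removable T D) {E : Finset ℕ} (hE : Disjoint D E) :
    Removable (T.remove E) D := by
  rcases h with ⟨g, rfl, hg | hg⟩ | ⟨g₁, g₂, rfl, hP⟩
  · exact .inl ⟨g, rfl, .inl (hg.remove (Finset.disjoint_singleton_left.mp hE))⟩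
  · exact .inl ⟨g, rfl, .inr (hg.remove (Finset.disjoint_singleton_left.mp hE))⟩
  · rw [Finset.disjoint_insert_left, Finset.disjoint_singleton_left] at hE
    exact .inr ⟨g₁, g₂, rfl, hP.remove hE.1 hE.2⟩

end Removable

lemma PreBM.IsoMap.removable {f : ℕ → ℕ} {T T' : PreBM H} (hf : IsoMap f T T')
    (hs : T.s ∈ T.G) {D : Finset ℕ} (h : Removable T D) : Removable T' (D.image f) := by
  rcases h with ⟨g, rfl, hg | hg⟩ | ⟨g₁, g₂, rfl, hP⟩
  · exact .inl ⟨f g, by simp, .inl (hf.annihilating hs hg)⟩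
  · exact .inl ⟨f g, by simp, .inr (hf.coreElt hs hg)⟩
  · exact .inr ⟨f g₁, f g₂, by simp [Finset.image_insert], hf.complPair hs hP⟩

lemma primitive_iff_forall_not_removable {T : PreBM H} :
    Primitive T ↔ ∀ D, ¬Removable T D := by
  simp only [Primitive, Removable, not_or, not_exists, not_and]
  constructor
  · rintro ⟨hA, hC, hP⟩ D
    exact ⟨fun g _ => ⟨hA g, hC g⟩, fun g₁ g₂ _ => hP g₁ g₂⟩
  · intro h
    exact ⟨fun g hg => ((h {g}).1 g rfl).1 hg, fun g hg => ((h {g}).1 g rfl).2 hg,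
      fun g₁ g₂ hg => (h {g₁, g₂}).2 g₁ g₂ rfl hg⟩

namespace Reduces

variable {T T' : PreBM H}

lemma card_lt (h : Reduces T T') : T'.G.card < T.G.card := by
  obtain ⟨D, hD, rfl⟩ := h
  exact Finset.card_lt_card (Finset.sdiff_ssubset hD.subset hD.nonempty)

lemma isBM (hT : IsBM T) (h : Reduces T T') : IsBM T' := by
  obtain ⟨D, hD, rfl⟩ := h
  exact hT.remove hD.s_notMem

lemma stepExt (hT : IsBM T) (h : Reduces T T') : StepExt T' T := by
  refine ⟨h.isBM hT, hT, ?_⟩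
  obtain ⟨D, hD, rfl⟩ := h
  have hs := hD.s_notMem
  rcases hD with ⟨g, rfl, ⟨hg, -, hb⟩ | ⟨hg, -, hb⟩⟩ | ⟨g₁, g₂, rfl, hg₁, hg₂, -, -, hne, hb⟩
  · exact .inl ⟨rfl, g, by simp, by simp [hg], fun _ _ _ _ => rfl, hb⟩
  · exact .inr <| .inl ⟨rfl, g, by simp, by simp [hg], fun _ _ _ _ => rfl, hb⟩
  · refine .inr <| .inr ⟨rfl, g₁, g₂, by simp, by simp, hne, ?_, fun _ _ _ _ => rfl, hb⟩
    ext x; by_cases x = g₁ <;> by_cases x = g₂ <;> simp_all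

end Reduces

lemma StepExt.exists_reduces {T T' : PreBM H} (h : StepExt T T') :
    ∃ T'', Reduces T' T'' ∧ BMIso T T'' := by
  obtain ⟨hT, -, hext⟩ := h
  have hs : T'.s = T.s := by rcases hext with h | h | h <;> exact h.1
  have hne : ∀ g ∉ T.G, g ≠ T'.s := fun g hg e => hg (by rw [e, hs]; exact hT.1)
  rcases hext with ⟨-, g, hg, hG, hb, hann⟩ | ⟨-, g, hg, hG, hb, hcore⟩ |
    ⟨-, g₁, g₂, hg₁, hg₂, hne₁₂, hG, hb, hsum⟩
  · refine ⟨T'.remove {g}, ⟨{g}, .inl ⟨g, rfl, .inl ⟨by simp [hG], hne g hg, hann⟩⟩, rfl⟩,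
      BMIso.of_agree ?_ hs.symm hb⟩
    rw [remove_G, hG, Finset.sdiff_singleton_eq_erase, Finset.erase_insert hg]
  · refine ⟨T'.remove {g}, ⟨{g}, .inl ⟨g, rfl, .inr ⟨by simp [hG], hne g hg, hcore⟩⟩, rfl⟩,
      BMIso.of_agree ?_ hs.symm hb⟩
    rw [remove_G, hG, Finset.sdiff_singleton_eq_erase, Finset.erase_insert hg]
  · refine ⟨T'.remove {g₁, g₂}, ⟨{g₁, g₂}, .inr ⟨g₁, g₂, rfl, ⟨by simp [hG], by simp [hG],
      hne g₁ hg₁, hne g₂ hg₂, hne₁₂, hsum⟩⟩, rfl⟩, BMIso.of_agree ?_ hs.symm hb⟩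
    ext x; by_cases x = g₁ <;> by_cases x = g₂ <;> simp_all

open Relation

lemma Primitive.of_bmIso {T T' : PreBM H} (hT : Primitive T) (hs : T.s ∈ T.G)
    (e : BMIso T T') : Primitive T' := by
  obtain ⟨f, hf⟩ := bmIso_iff.mp (e.symm hs)
  rw [primitive_iff_forall_not_removable] at hT ⊢
  exact fun D hD => hT _ (hf.removable (e.s_mem hs) hD)

lemma Reduces.exists_of_bmIso {A A₁ B : PreBM H} (h : Reduces A A₁) (e : BMIso A B)
    (hs : A.s ∈ A.G) : ∃ B₁, Reduces B B₁ ∧ BMIso A₁ B₁ := by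
  obtain ⟨D, hD, rfl⟩ := h
  obtain ⟨f, hf⟩ := bmIso_iff.mp e
  exact ⟨_, ⟨_, hf.removable hs hD, rfl⟩, bmIso_iff.mpr ⟨f, hf.remove hD.subset⟩⟩

lemma isBM_of_reflTransGen {T P : PreBM H} (hT : IsBM T) (h : ReflTransGen Reduces T P) :
    IsBM P := by
  induction h with
  | refl => exact hT
  | tail _ h ih => exact h.isBM ih

lemma exists_reflTransGen_of_bmIso {A P B : PreBM H} (h : ReflTransGen Reduces A P)
    (e : BMIso A B) (hA : IsBM A) : ∃ Q, ReflTransGen Reduces B Q ∧ BMIso P Q := by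
  induction h using ReflTransGen.head_induction_on generalizing B with
  | refl => exact ⟨B, .refl, e⟩
  | head h _ ih =>
    obtain ⟨B₁, hB, e₁⟩ := h.exists_of_bmIso e hA.1
    obtain ⟨Q, hQ, e'⟩ := ih e₁ (h.isBM hA)
    exact ⟨Q, .head hB hQ, e'⟩

def IsPrimitiveReduct (T P : PreBM H) : Prop := ReflTransGen Reduces T P ∧ Primitive P

namespace IsPrimitiveReduct

lemma isBM {T P : PreBM H} (h : IsPrimitiveReduct T P) (hT : IsBM T) : IsBM P :=
  isBM_of_reflTransGen hT h.1

lemma exists_of_bmIso {A P B : PreBM H} (h : IsPrimitiveReduct A P) (e : BMIso A B)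
    (hA : IsBM A) : ∃ Q, IsPrimitiveReduct B Q ∧ BMIso P Q := by
  obtain ⟨Q, hBQ, e'⟩ := exists_reflTransGen_of_bmIso h.1 e hA
  exact ⟨Q, ⟨hBQ, h.2.of_bmIso (h.isBM hA).1 e'⟩, e'⟩

end IsPrimitiveReduct

theorem exists_isPrimitiveReduct {T : PreBM H} (hT : IsBM T) : ∃ P, IsPrimitiveReduct T P := by
  by_cases hp : Primitive T
  · exact ⟨T, .refl, hp⟩
  · obtain ⟨D, hD⟩ : ∃ D, Removable T D := by
      simpa [primitive_iff_forall_not_removable] using hp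
    have h : Reduces T (T.remove D) := ⟨D, hD, rfl⟩
    obtain ⟨P, hP⟩ := exists_isPrimitiveReduct (h.isBM hT)
    exact ⟨P, .head h hP.1, hP.2⟩
termination_by T.G.card
decreasing_by exact h.card_lt

lemma isoMap_swap {T : PreBM H} (hT : IsBM T) {a a' : ℕ} (ha : a ∈ T.G) (ha' : a' ∈ T.G)
    (has : a ≠ T.s) (ha's : a' ≠ T.s) (hrow : ∀ h ∈ T.G, T.b a h = T.b a' h) :
    IsoMap (Equiv.swap a a') T T := by
  have hbij := Equiv.bijOn_swap (s := (T.G : Set ℕ)) ha ha'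
  have hrow' : ∀ x ∈ T.G, ∀ h ∈ T.G, T.b (Equiv.swap a a' x) h = T.b x h := by
    intro x _ h hh
    rw [Equiv.swap_apply_def]
    split_ifs with hxa hxa'
    · rw [hxa, hrow h hh]
    · rw [hxa', hrow h hh]
    · rfl
  have hcol : ∀ x ∈ T.G, ∀ h ∈ T.G, T.b h (Equiv.swap a a' x) = T.b h x := by
    intro x hx h hh
    rw [hT.2.1 h hh _ (hbij.mapsTo hx), hT.2.1 h hh x hx, hrow' x hx h hh]
  refine ⟨hbij, Equiv.swap_apply_of_ne_of_ne has.symm ha's.symm, fun g hg h hh => ?_⟩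
  rw [hrow' g hg _ (hbij.mapsTo hh), hcol h hh g hg]

lemma ComplPair.row_eq {T : PreBM H} {a a' c : ℕ} (hP : ComplPair T a c)
    (hQ : ComplPair T a' c) : ∀ h ∈ T.G, T.b a h = T.b a' h :=
  fun h hh => add_right_cancel ((hP.2.2.2.2.2 h hh).trans (hQ.2.2.2.2.2 h hh).symm)

def Joinable (T₁ T₂ : PreBM H) : Prop :=
  ∃ U₁ U₂, ReflTransGen Reduces T₁ U₁ ∧ ReflTransGen Reduces T₂ U₂ ∧ BMIso U₁ U₂

namespace Joinable

@[refl] lemma refl (T : PreBM H) : Joinable T T := ⟨T, T, .refl, .refl, .refl T⟩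

lemma symm {T₁ T₂ : PreBM H} (h : Joinable T₁ T₂) (hT₁ : IsBM T₁) : Joinable T₂ T₁ := by
  obtain ⟨U₁, U₂, h₁, h₂, e⟩ := h
  exact ⟨U₂, U₁, h₂, h₁, e.symm (isBM_of_reflTransGen hT₁ h₁).1⟩

end Joinable

section LocalConfluence

variable {T : PreBM H}

lemma joinable_remove_of_disjoint {D D' : Finset ℕ} (hD : Removable T D)
    (hD' : Removable T D') (h : Disjoint D D') : Joinable (T.remove D) (T.remove D') := by
  refine ⟨T.remove (D ∪ D'), T.remove (D ∪ D'), .single ⟨D', hD'.remove h.symm, ?_⟩,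
    .single ⟨D, hD.remove h, ?_⟩, .refl _⟩
  · rw [remove_remove]
  · rw [remove_remove, Finset.union_comm]

lemma joinable_remove_singleton_remove_pair {g g' : ℕ} (hg : Annihilating T g ∨ CoreElt T g)
    (hP : ComplPair T g g') : Joinable (T.remove {g}) (T.remove {g, g'}) := by
  have hg' : Removable (T.remove {g}) {g'} :=
    .inl ⟨g', rfl, hg.imp (·.coreElt_remove hP) (·.annihilating_remove hP) |>.symm⟩
  refine ⟨_, _, .single ⟨_, hg', rfl⟩, .refl, ?_⟩
  rw [remove_remove, ← Finset.insert_eq]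

lemma joinable_remove_pair_remove_pair (hT : IsBM T) {a a' c : ℕ} (hP : ComplPair T a c)
    (hQ : ComplPair T a' c) : Joinable (T.remove {a, c}) (T.remove {a', c}) := by
  have hf := (isoMap_swap hT hP.1 hQ.1 hP.2.2.1 hQ.2.2.1 (hP.row_eq hQ)).remove
    (Removable.subset (.inr ⟨a, c, rfl, hP⟩))
  rw [Finset.image_insert, Finset.image_singleton, Equiv.swap_apply_left,
    Equiv.swap_apply_of_ne_of_ne hP.2.2.2.2.1.symm hQ.2.2.2.2.1.symm] at hf
  exact ⟨_, _, .refl, .refl, bmIso_iff.mpr ⟨_, hf⟩⟩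

lemma Removable.joinable (hT : IsBM T) {D D' : Finset ℕ} (hD : Removable T D)
    (hD' : Removable T D') : Joinable (T.remove D) (T.remove D') := by
  by_cases h : Disjoint D D'
  · exact joinable_remove_of_disjoint hD hD' h
  have hBM := hT.remove hD'.s_notMem
  rcases hD with ⟨g, rfl, hg⟩ | ⟨g₁, g₂, rfl, hP⟩ <;>
    rcases hD' with ⟨g', rfl, hg'⟩ | ⟨g₃, g₄, rfl, hQ⟩
  · obtain rfl : g = g' := by simpa using h
    rfl
  · obtain rfl | rfl : g = g₃ ∨ g = g₄ := by contrapose! h; simp [h]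
    · exact joinable_remove_singleton_remove_pair hg hQ
    · rw [Finset.pair_comm]
      exact joinable_remove_singleton_remove_pair hg hQ.symm
  · obtain rfl | rfl : g' = g₁ ∨ g' = g₂ := by contrapose! h; simpa [eq_comm] using h
    · exact (joinable_remove_singleton_remove_pair hg' hP).symm hBM
    · rw [Finset.pair_comm]
      exact (joinable_remove_singleton_remove_pair hg' hP.symm).symm hBM
  · obtain rfl | rfl | rfl | rfl : g₁ = g₃ ∨ g₁ = g₄ ∨ g₂ = g₃ ∨ g₂ = g₄ := by
      contrapose! h
      simp [eq_comm, h]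
    · rw [Finset.pair_comm, Finset.pair_comm g₁]
      exact joinable_remove_pair_remove_pair hT hP.symm hQ.symm
    · rw [Finset.pair_comm]
      exact joinable_remove_pair_remove_pair hT hP.symm hQ
    · rw [Finset.pair_comm g₂]
      exact joinable_remove_pair_remove_pair hT hP hQ.symm
    · exact joinable_remove_pair_remove_pair hT hP hQ

end LocalConfluence

lemma Primitive.not_reduces {T T' : PreBM H} (hT : Primitive T) : ¬Reduces T T' :=
  fun ⟨D, hD, _⟩ => primitive_iff_forall_not_removable.mp hT D hD

-- Newman's lemma up to isomorphism: `Reduces` terminates and is locally confluent.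
theorem IsPrimitiveReduct.bmIso {T P P' : PreBM H} (hT : IsBM T) (hP : IsPrimitiveReduct T P)
    (hP' : IsPrimitiveReduct T P') : BMIso P P' := by
  obtain ⟨hTP, hPprim⟩ := hP
  obtain ⟨hTP', hP'prim⟩ := hP'
  rcases hTP.cases_head with rfl | ⟨T₁, h₁, hT₁P⟩ <;>
    rcases hTP'.cases_head with rfl | ⟨T₂, h₂, hT₂P'⟩
  · rfl
  · exact absurd h₂ hPprim.not_reduces
  · exact absurd h₁ hP'prim.not_reduces
  obtain ⟨U₁, U₂, hU₁, hU₂, e⟩ : Joinable T₁ T₂ := by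
    obtain ⟨D, hD, rfl⟩ := h₁
    obtain ⟨D', hD', rfl⟩ := h₂
    exact hD.joinable hT hD'
  have hT₁ := h₁.isBM hT
  have hT₂ := h₂.isBM hT
  have hU₁BM := isBM_of_reflTransGen hT₁ hU₁
  obtain ⟨W, hW⟩ := exists_isPrimitiveReduct hU₁BM
  obtain ⟨W', hW', eW⟩ := hW.exists_of_bmIso e hU₁BM
  have e₁ : BMIso P W := bmIso hT₁ ⟨hT₁P, hPprim⟩ ⟨hU₁.trans hW.1, hW.2⟩
  have e₂ : BMIso P' W' := bmIso hT₂ ⟨hT₂P', hP'prim⟩ ⟨hU₂.trans hW'.1, hW'.2⟩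
  exact e₁.trans (eW.trans (e₂.symm (isBM_of_reflTransGen hT₂ hT₂P').1))
termination_by T.G.card
decreasing_by
  · exact h₁.card_lt
  · exact h₂.card_lt

lemma Homologous.isBM_iff {T T' : PreBM H} (h : Homologous T T') : IsBM T ↔ IsBM T' := by
  induction h with
  | rel _ _ h =>
    obtain ⟨hT, hT'⟩ : IsBM _ ∧ IsBM _ := h.elim (fun h => ⟨h.1, h.2.1⟩) fun h => ⟨h.1, h.2.1⟩
    exact iff_of_true hT hT'
  | refl => rfl
  | symm _ _ _ ih => exact ih.symm
  | trans _ _ _ _ _ ih₁ ih₂ => exact ih₁.trans ih₂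

theorem Homologous.bmIso {T T' P P' : PreBM H} (h : Homologous T T') (hT : IsBM T)
    (hP : IsPrimitiveReduct T P) (hP' : IsPrimitiveReduct T' P') : BMIso P P' := by
  induction h generalizing P P' with
  | rel T T' h =>
    have hT' : IsBM T' := h.elim (·.2.1) (·.2.1)
    obtain ⟨T'', hT'T'', e⟩ : ∃ T'', ReflTransGen Reduces T' T'' ∧ BMIso T T'' := by
      rcases h with h | ⟨-, -, e⟩
      · obtain ⟨T'', h, e⟩ := h.exists_reduces
        exact ⟨T'', .single h, e⟩
      · exact ⟨T', .refl, e⟩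
    obtain ⟨Q, hQ, eQ⟩ := hP.exists_of_bmIso e hT
    exact eQ.trans (IsPrimitiveReduct.bmIso hT' ⟨hT'T''.trans hQ.1, hQ.2⟩ hP')
  | refl => exact IsPrimitiveReduct.bmIso hT hP hP'
  | symm T T' h ih =>
    have hT' := (Homologous.isBM_iff h).mpr hT
    exact (ih hT' hP' hP).symm (hP'.isBM hT').1
  | trans T T' T'' h _ ih₁ ih₂ =>
    have hT' := (Homologous.isBM_iff h).mp hT
    obtain ⟨Q, hQ⟩ := exists_isPrimitiveReduct hT'
    exact (ih₁ hT hP hQ).trans (ih₂ hT' hQ hP')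

lemma reflTransGen_stepExt_of_reduces {T P : PreBM H} (hT : IsBM T)
    (h : ReflTransGen Reduces T P) : ReflTransGen StepExt P T := by
  induction h with
  | refl => rfl
  | tail hTQ h ih => exact .head (h.stepExt (isBM_of_reflTransGen hT hTQ)) ih

lemma homologous_of_reflTransGen {T T' : PreBM H} (h : ReflTransGen StepExt T T') :
    Homologous T T' :=
  EqvGen.mono (fun _ _ h => Or.inl h) _ _ (EqvGen.reflTransGen_le_eqvGen _ _ _ h)

theorem primitive_reduction (H : Type*) [AddCommGroup H] :
    (∀ T : PreBM H, IsBM T →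
      ∃ P : PreBM H, IsBM P ∧ Primitive P ∧ Relation.ReflTransGen StepExt P T) ∧
    (∀ P P' : PreBM H, IsBM P → IsBM P' → Primitive P → Primitive P' →
      Homologous P P' → BMIso P P') ∧
    (∀ T : PreBM H, IsBM T →
      ∃ P : PreBM H, IsBM P ∧ Primitive P ∧ Homologous P T ∧
        ∀ P' : PreBM H, IsBM P' → Primitive P' → Homologous P' T → BMIso P P') := by
  have exists_primitive : ∀ T : PreBM H, IsBM T →
      ∃ P : PreBM H, IsBM P ∧ Primitive P ∧ ReflTransGen StepExt P T := by
    intro T hT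
    obtain ⟨P, hP⟩ := exists_isPrimitiveReduct hT
    exact ⟨P, hP.isBM hT, hP.2, reflTransGen_stepExt_of_reduces hT hP.1⟩
  have iso_of_homologous : ∀ P P' : PreBM H, IsBM P → IsBM P' → Primitive P → Primitive P' →
      Homologous P P' → BMIso P P' :=
    fun P P' hP _ hp hp' h => h.bmIso hP ⟨.refl, hp⟩ ⟨.refl, hp'⟩
  refine ⟨exists_primitive, iso_of_homologous, fun T hT => ?_⟩
  obtain ⟨P, hP, hp, hPT⟩ := exists_primitive T hT
  have hPT := homologous_of_reflTransGen hPT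
  exact ⟨P, hP, hp, hPT, fun P' hP' hp' hP'T =>
    iso_of_homologous P P' hP hP' hp hp' (.trans _ _ _ hPT (.symm _ _ hP'T))⟩
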